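/- For ω ∈ S_n, the poset M_ω contains a subposet isomorphic to the Boolean lattice B₂ of rank 2 (four distinct elements with a maximum, a minimum, and two incomparable middle elements) if and only if M_ω contains a parallelogram pattern: indices i < j, b < a in [c_i(ω)], c < d in [c_j(ω)] with a + c = b + d, such that m_{i,a}(ω) > m_{j,d}(ω), m_{i,b}(ω) > m_{j,c}(ω), and m_{i,b}(ω), m_{j,d}(ω) are incomparable. -/
import Mathlib


open Finset

/-- `c_i(ω)`: the number of `j > i` with `ω i > ω j` (the Lehmer code entries). -/
def lehmer {n : ℕ} (ω : Equiv.Perm (Fin n)) (i : Fin n) : ℕ :=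
  (univ.filter fun j => i < j ∧ ω j < ω i).card

/-- `c_{i,j}(ω)`: the number of `k` with `i < k < j` and `ω i > ω k`. -/
def cij {n : ℕ} (ω : Equiv.Perm (Fin n)) (i j : Fin n) : ℕ :=
  (univ.filter fun k => i < k ∧ k < j ∧ ω k < ω i).card

/-- `m_{i,x}(ω) ∈ ℕ^n`, defined coordinatewise. -/
def mvec {n : ℕ} (ω : Equiv.Perm (Fin n)) (i : Fin n) (x : ℕ) : Fin n → ℕ :=
  fun j => if j < i then 0 else if j = i then x
    else if ω j < ω i then 0 else x - cij ω i j

/-- The set `M_ω` of join-irreducibles, as a subset of `ℕ^n`. -/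
def MSet {n : ℕ} (ω : Equiv.Perm (Fin n)) : Set (Fin n → ℕ) :=
  {v | ∃ i : Fin n, ∃ x : ℕ, 1 ≤ x ∧ x ≤ lehmer ω i ∧ v = mvec ω i x}

/-- `M_ω` has a parallelogram pattern. -/
def Parallelogram {n : ℕ} (ω : Equiv.Perm (Fin n)) : Prop :=
  ∃ i j : Fin n, ∃ a b c d : ℕ, i < j ∧
    b < a ∧ 1 ≤ b ∧ a ≤ lehmer ω i ∧
    c < d ∧ 1 ≤ c ∧ d ≤ lehmer ω j ∧
    a + c = b + d ∧
    mvec ω j d < mvec ω i a ∧ mvec ω j c < mvec ω i b ∧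
    ¬ mvec ω i b ≤ mvec ω j d ∧ ¬ mvec ω j d ≤ mvec ω i b

/-- `M_ω` has a `B₂`-pattern: four elements with a max, a min and two incomparable
middle elements. -/
def B2Pattern {n : ℕ} (ω : Equiv.Perm (Fin n)) : Prop :=
  ∃ w x y z : Fin n → ℕ, w ∈ MSet ω ∧ x ∈ MSet ω ∧ y ∈ MSet ω ∧ z ∈ MSet ω ∧
    x < w ∧ y < w ∧ z < x ∧ z < y ∧ ¬ x ≤ y ∧ ¬ y ≤ x

section Aux
variable {n : ℕ} (ω : Equiv.Perm (Fin n))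

lemma mvec_self (i : Fin n) (x : ℕ) : mvec ω i x i = x := by
  simp [mvec]

lemma mvec_of_lt {i j : Fin n} (h : j < i) (x : ℕ) : mvec ω i x j = 0 := by
  simp [mvec, h]

lemma mvec_mono (i : Fin n) {x y : ℕ} (h : x ≤ y) : mvec ω i x ≤ mvec ω i y := by
  intro k
  show mvec ω i x k ≤ mvec ω i y k
  simp only [mvec]
  split_ifs <;> omega

lemma mvec_strict_mono (i : Fin n) {x y : ℕ} (h : x < y) : mvec ω i x < mvec ω i y := by
  refine lt_of_le_of_ne (mvec_mono ω i h.le) fun he => ?_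
  have := congrFun he i
  rw [mvec_self, mvec_self] at this
  omega

lemma cij_mono {i j q : Fin n} (h : j ≤ q) : cij ω i j ≤ cij ω i q := by
  apply card_le_card
  intro k hk
  simp only [mem_filter, mem_univ, true_and] at *
  exact ⟨hk.1, hk.2.1.trans_le h, hk.2.2⟩

lemma cij_triangle {i j k : Fin n} (hij : i < j) (hjk : j < k) (hω : ω i < ω j) :
    cij ω i k ≤ cij ω i j + cij ω j k := by
  calc cij ω i k ≤ ((univ.filter fun m => i < m ∧ m < j ∧ ω m < ω i) ∪
        (univ.filter fun m => j < m ∧ m < k ∧ ω m < ω j)).card := by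
        apply card_le_card
        intro m hm
        simp only [mem_filter, mem_univ, true_and, mem_union] at *
        rcases lt_trichotomy m j with h' | h' | h'
        · exact Or.inl ⟨hm.1, h', hm.2.2⟩
        · subst h'; exact absurd hm.2.2 (asymm hω)
        · exact Or.inr ⟨h', hm.2.1, hm.2.2.trans hω⟩
    _ ≤ _ := card_union_le _ _

lemma mvec_le_mvec {i j : Fin n} {x y : ℕ} (hij : i < j) (hω : ω i < ω j)
    (h : y + cij ω i j ≤ x) : mvec ω j y ≤ mvec ω i x := by
  intro k
  show mvec ω j y k ≤ mvec ω i x k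
  simp only [mvec]
  rcases lt_trichotomy k j with hk | hk | hk
  · simp only [if_pos hk]; exact Nat.zero_le _
  · subst hk
    rw [if_neg (lt_irrefl k), if_pos rfl, if_neg (asymm hij), if_neg hij.ne',
      if_neg (asymm hω)]
    omega
  · have hik : i < k := hij.trans hk
    rw [if_neg (asymm hk), if_neg hk.ne', if_neg (asymm hik), if_neg hik.ne']
    by_cases hωk : ω k < ω j
    · rw [if_pos hωk]; exact Nat.zero_le _
    · have hωik : ¬ ω k < ω i := fun h' => hωk (h'.trans hω)
      rw [if_neg hωk, if_neg hωik]
      have ht := cij_triangle ω hij hk hω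
      omega

lemma mvec_lt_mvec {i j : Fin n} {x y : ℕ} (hij : i < j) (hω : ω i < ω j)
    (h : y + cij ω i j ≤ x) (hx : 1 ≤ x) : mvec ω j y < mvec ω i x := by
  refine lt_of_le_of_ne (mvec_le_mvec ω hij hω h) fun he => ?_
  have := congrFun he i
  rw [mvec_self, mvec_of_lt ω hij] at this
  omega

lemma le_cases {i j : Fin n} {x y : ℕ} (hy : 1 ≤ y) (h : mvec ω j y ≤ mvec ω i x) :
    (i = j ∧ y ≤ x) ∨ (i < j ∧ ω i < ω j ∧ y + cij ω i j ≤ x) := by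
  have hj : mvec ω j y j ≤ mvec ω i x j := h j
  rw [mvec_self] at hj
  rcases lt_trichotomy j i with hk | hk | hk
  · rw [mvec_of_lt ω hk] at hj
    exact absurd hj (by omega)
  · exact Or.inl ⟨hk.symm, by rwa [hk, mvec_self] at hj⟩
  · simp only [mvec, if_neg (asymm hk), if_neg hk.ne'] at hj
    by_cases hωk : ω j < ω i
    · rw [if_pos hωk] at hj
      exact absurd hj (by omega)
    · rw [if_neg hωk] at hj
      have hne : ω i ≠ ω j := fun e => hk.ne' (ω.injective e.symm)
      exact Or.inr ⟨hk, lt_of_le_of_ne (not_lt.mp hωk) hne, by omega⟩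

lemma build {P J : Fin n} (hPJ : P < J) (hω : ω P < ω J) (V : ℕ) (hV2 : 2 ≤ V)
    (hVJ : V ≤ lehmer ω J) (hVP : V + cij ω P J ≤ lehmer ω P) : Parallelogram ω := by
  refine ⟨P, J, V + cij ω P J, V - 1 + cij ω P J, V - 1, V, hPJ, by omega, by omega, hVP,
    by omega, by omega, hVJ, by omega, ?_, ?_, ?_, ?_⟩
  · exact mvec_lt_mvec ω hPJ hω le_rfl (by omega)
  · exact mvec_lt_mvec ω hPJ hω (by omega) (by omega)
  · intro h
    have h2 : mvec ω P (V - 1 + cij ω P J) P ≤ mvec ω J V P := h P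
    rw [mvec_self, mvec_of_lt ω hPJ] at h2
    omega
  · intro h
    rcases le_cases ω (by omega : 1 ≤ V) h with ⟨he, _⟩ | ⟨_, _, hle⟩
    · exact absurd he hPJ.ne
    · omega

lemma key {p q i j : Fin n} {s t u v : ℕ}
    (hs2 : s ≤ lehmer ω p) (hu1 : 1 ≤ u) (hu2 : u ≤ lehmer ω i)
    (hv1 : 1 ≤ v) (hv2 : v ≤ lehmer ω j) (ht1 : 1 ≤ t)
    (hxw : mvec ω i u ≤ mvec ω p s) (hyw : mvec ω j v ≤ mvec ω p s)
    (hzx : mvec ω q t ≤ mvec ω i u) (hzy : mvec ω q t ≤ mvec ω j v)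
    (hyx : ¬ mvec ω j v ≤ mvec ω i u) (hij : i < j) : Parallelogram ω := by
  have hup := le_cases ω hu1 hxw
  have hqj : j ≤ q := by
    rcases le_cases ω ht1 hzy with ⟨he, _⟩ | ⟨h', _, _⟩
    · exact he.le
    · exact h'.le
  have hzx' : i < q ∧ ω i < ω q ∧ t + cij ω i q ≤ u := by
    rcases le_cases ω ht1 hzx with ⟨he, _⟩ | h'
    · exact absurd (lt_of_lt_of_le hij (he ▸ hqj)) (lt_irrefl i)
    · exact h'
  have hpi : p ≤ i := by
    rcases hup with ⟨h', _⟩ | ⟨h', _, _⟩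
    · exact h'.le
    · exact h'.le
  have hωij : ω i ≠ ω j := fun e => hij.ne (ω.injective e)
  rcases lt_or_gt_of_ne hωij with hω | hω
  · -- ω i < ω j
    have hcm : cij ω i j ≤ cij ω i q := cij_mono ω hqj
    have htu := hzx'.2.2
    have huv : u < v + cij ω i j := by
      by_contra h'
      push_neg at h'
      exact hyx (mvec_le_mvec ω hij hω h')
    have hv2' : 2 ≤ v := by omega
    rcases le_cases ω hv1 hyw with ⟨he, _⟩ | ⟨hpj, hωpj, hvs⟩
    · exact absurd (he ▸ hij) (not_lt.mpr hpi)
    · exact build ω hpj hωpj v hv2' hv2 (hvs.trans hs2)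
  · -- ω j < ω i
    have hjq : j < q := by
      rcases lt_or_eq_of_le hqj with h' | h'
      · exact h'
      · exact absurd (h' ▸ hzx'.2.1) (asymm hω)
    have h1 : 1 ≤ cij ω i q := by
      rw [cij]
      refine card_pos.mpr ⟨j, ?_⟩
      simp only [mem_filter, mem_univ, true_and]
      exact ⟨hij, hjq, hω⟩
    have hu2' : 2 ≤ u := by
      have := hzx'.2.2
      omega
    rcases hup with ⟨hpi', _⟩ | ⟨hpi', hωpi, hus⟩
    · rcases le_cases ω hv1 hyw with ⟨hpj, _⟩ | ⟨_, hωpj, _⟩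
      · exact absurd (hpi'.symm.trans hpj) hij.ne
      · exact absurd (hpi' ▸ hωpj) (asymm hω)
    · exact build ω hpi' hωpi u hu2' hu2 (hus.trans hs2)

end Aux

theorem stmt11 (n : ℕ) (ω : Equiv.Perm (Fin n)) :
    B2Pattern ω ↔ Parallelogram ω := by
  constructor
  · rintro ⟨w, x, y, z, ⟨p, s, hs1, hs2, rfl⟩, ⟨i, u, hu1, hu2, rfl⟩, ⟨j, v, hv1, hv2, rfl⟩,
      ⟨q, t, ht1, ht2, rfl⟩, hxw, hyw, hzx, hzy, hxy, hyx⟩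
    have hij : i ≠ j := by
      rintro rfl
      rcases le_total u v with h | h
      · exact hxy (mvec_mono ω i h)
      · exact hyx (mvec_mono ω i h)
    rcases hij.lt_or_gt with h | h
    · exact key ω hs2 hu1 hu2 hv1 hv2 ht1 hxw.le hyw.le hzx.le hzy.le hyx h
    · exact key ω hs2 hv1 hv2 hu1 hu2 ht1 hyw.le hxw.le hzy.le hzx.le hxy h
  · rintro ⟨i, j, a, b, c, d, hij, hba, hb1, ha, hcd, hc1, hd, hsum, h1, h2, h3, h4⟩
    exact ⟨mvec ω i a, mvec ω i b, mvec ω j d, mvec ω j c,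
      ⟨i, a, by omega, ha, rfl⟩, ⟨i, b, hb1, by omega, rfl⟩,
      ⟨j, d, by omega, hd, rfl⟩, ⟨j, c, hc1, by omega, rfl⟩,
      mvec_strict_mono ω i hba, h1, h2, mvec_strict_mono ω j hcd, h3, h4⟩
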